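/- arXiv:1605.05421 — 2 statements merged into one kernel-verified Lean document; each statement's English description precedes it below -/
import Mathlib

section
/- Under the hypotheses of the half-partition lemma, n divides both ∏_{i≠j}(k−λ_i) + ∏_{i≠j}(λ_j−λ_i) and ∏_{i≠j}(k−λ_i) − ∏_{i≠j}(λ_j−λ_i), where the products run over all distinct eigenvalues λ_i with i ≠ j (including λ₁ = k in the second factor convention of the paper). -/
/-!
Let `u` be a unit eigenvector of the simple eigenvalue `λⱼ` of `A`. Walk-regularity makes the
diagonal of every polynomial in `A` constant; for the polynomial that sends `A` to a multiple of
the projection `u uᵀ` this gives `n uₓ² = 1` at every vertex. As `u ⟂ 𝟙`, both signs occur among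
the entries of `u`, and reading `A u = λⱼ u` at one vertex shows that `λⱼ` is an integer.
So the roots of `p = ∏ (X - μ)`, over the remaining distinct eigenvalues `μ`, are closed under
conjugation: `p` is a product of minimal polynomials over `ℤ`, and `p(A)` is an integer matrix.
On the other hand `p(A) = p(k) J / n + p(λⱼ) u uᵀ`, whose entries at `(x, x)` and at `(x, y)`
with `uᵧ = -uₓ` are `(p(k) ± p(λⱼ)) / n`.
-/

open Polynomial

noncomputable def adjm {V : Type*} [Fintype V] [DecidableEq V] (G : SimpleGraph V) :
    Matrix V V ℝ :=
  @SimpleGraph.adjMatrix ℝ V G (Classical.decRel _) _ _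

/-- The adjacency spectrum of `G`, as a multiset of real roots of the
characteristic polynomial (so multiplicities are counted). -/
noncomputable def spec {V : Type*} [Fintype V] [DecidableEq V] (G : SimpleGraph V) :
    Multiset ℝ :=
  (adjm G).charpoly.roots

def IsReg {V : Type*} (G : SimpleGraph V) (k : ℕ) : Prop :=
  ∀ v : V, (G.neighborSet v).ncard = k

open Matrix

section IntegerPolynomial

variable {K : Type*} [Field K] [CharZero K]

theorem minpoly_eq_of_aeval_minpoly_eq_zero {μ ν : K} (hμ : IsIntegral ℤ μ)
    (h : aeval ν (minpoly ℤ μ) = 0) : minpoly ℤ ν = minpoly ℤ μ := by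
  have hν : IsIntegral ℤ ν := ⟨minpoly ℤ μ, minpoly.monic hμ, by rwa [aeval_def] at h⟩
  exact eq_of_monic_of_associated (minpoly.monic hν) (minpoly.monic hμ)
    ((minpoly.irreducible hν).associated_of_dvd (minpoly.irreducible hμ)
      (minpoly.isIntegrallyClosed_dvd hν h))

theorem nodup_aroots_minpoly {μ : K} (hμ : IsIntegral ℤ μ) :
    ((minpoly ℤ μ).aroots K).Nodup := by
  have hQ : (minpoly ℤ μ).map (algebraMap ℤ K) = (minpoly ℚ μ).map (algebraMap ℚ K) := by
    rw [minpoly.isIntegrallyClosed_eq_field_fractions' ℚ hμ, Polynomial.map_map,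
      ← IsScalarTower.algebraMap_eq]
  rw [aroots, hQ]
  exact nodup_roots (minpoly.irreducible hμ.tower_top).separable.map

variable [DecidableEq K]

theorem map_minpoly_eq_prod {μ : K} (hμ : IsIntegral ℤ μ)
    (hs : ((minpoly ℤ μ).map (algebraMap ℤ K)).Splits) :
    (minpoly ℤ μ).map (algebraMap ℤ K) =
      ∏ ν ∈ ((minpoly ℤ μ).aroots K).toFinset, (X - C ν) := by
  rw [Finset.prod_eq_multiset_prod, Multiset.toFinset_val, (nodup_aroots_minpoly hμ).dedup]
  exact hs.eq_prod_roots_of_monic ((minpoly.monic hμ).map _)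

theorem exists_map_eq_prod_X_sub_C {S : Finset K} (hint : ∀ μ ∈ S, IsIntegral ℤ μ)
    (hs : ∀ μ ∈ S, ((minpoly ℤ μ).map (algebraMap ℤ K)).Splits)
    (hclosed : ∀ μ ∈ S, ∀ ν, aeval ν (minpoly ℤ μ) = 0 → ν ∈ S) :
    ∃ g : ℤ[X], g.map (algebraMap ℤ K) = ∏ μ ∈ S, (X - C μ) := by
  refine ⟨∏ q ∈ S.image (minpoly ℤ), q, ?_⟩
  rw [Polynomial.map_prod, ← Finset.prod_fiberwise_of_maps_to (g := minpoly ℤ)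
    (fun μ hμ => Finset.mem_image_of_mem (minpoly ℤ) hμ) (fun μ => X - C μ)]
  refine Finset.prod_congr rfl fun q hq => ?_
  obtain ⟨μ, hμS, rfl⟩ := Finset.mem_image.mp hq
  rw [map_minpoly_eq_prod (hint μ hμS) (hs μ hμS)]
  refine Finset.prod_congr (Finset.ext fun ν => ?_) fun _ _ => rfl
  rw [Multiset.mem_toFinset, mem_aroots, Finset.mem_filter]
  constructor
  · exact fun ⟨_, h⟩ =>
      ⟨hclosed μ hμS ν h, minpoly_eq_of_aeval_minpoly_eq_zero (hint μ hμS) h⟩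
  · rintro ⟨_, h⟩
    exact ⟨minpoly.ne_zero (hint μ hμS), h ▸ minpoly.aeval ℤ ν⟩

theorem exists_map_eq_prod_aroots_sdiff {f : ℤ[X]} (hf : f.Monic)
    (hs : (f.map (algebraMap ℤ K)).Splits) (T : Finset ℤ) :
    ∃ g : ℤ[X], g.map (algebraMap ℤ K) =
      ∏ μ ∈ (f.aroots K).toFinset \ T.image Int.cast, (X - C μ) := by
  have hroot : ∀ μ ∈ (f.aroots K).toFinset, aeval μ f = 0 := fun μ hμ =>
    (mem_aroots.mp (Multiset.mem_toFinset.mp hμ)).2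
  have hint : ∀ μ ∈ (f.aroots K).toFinset, IsIntegral ℤ μ := fun μ hμ =>
    ⟨f, hf, by rw [← aeval_def]; exact hroot μ hμ⟩
  have hdvd : ∀ μ ∈ (f.aroots K).toFinset, minpoly ℤ μ ∣ f := fun μ hμ =>
    minpoly.isIntegrallyClosed_dvd (hint μ hμ) (hroot μ hμ)
  refine exists_map_eq_prod_X_sub_C (fun μ hμ => hint μ (Finset.mem_sdiff.mp hμ).1)
    (fun μ hμ => hs.of_dvd (hf.map _).ne_zero
      (Polynomial.map_dvd _ (hdvd μ (Finset.mem_sdiff.mp hμ).1)))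
    fun μ hμ ν hν => ?_
  obtain ⟨hμR, hμT⟩ := Finset.mem_sdiff.mp hμ
  refine Finset.mem_sdiff.mpr ⟨?_, fun hνT => hμT ?_⟩
  · obtain ⟨g, hg⟩ := hdvd μ hμR
    refine Multiset.mem_toFinset.mpr (mem_aroots.mpr ⟨hf.ne_zero, ?_⟩)
    rw [hg, map_mul, hν, zero_mul]
  · -- an integer is its own only conjugate
    obtain ⟨t, ht, rfl⟩ := Finset.mem_image.mp hνT
    have hmin : minpoly ℤ μ = X - C t := by
      rw [← minpoly_eq_of_aeval_minpoly_eq_zero (hint μ hμR) hν, ← eq_intCast (algebraMap ℤ K),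
        minpoly.eq_X_sub_C_of_algebraMap_inj _ (RingHom.injective_int (algebraMap ℤ K))]
    have hμt := minpoly.aeval ℤ μ
    rw [hmin, map_sub, aeval_X, aeval_C, eq_intCast, sub_eq_zero] at hμt
    exact Finset.mem_image.mpr ⟨t, ht, hμt.symm⟩

end IntegerPolynomial

theorem Multiset.existsUnique_of_count_map_univ_eq_one {ι α : Type*} [Fintype ι]
    [DecidableEq α] {f : ι → α} {a : α} (h : (Finset.univ.val.map f).count a = 1) :
    ∃! i, f i = a := by
  rw [Multiset.count_map, ← Finset.filter_val, Finset.card_val, Finset.card_eq_one] at h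
  obtain ⟨i, hi⟩ := h
  refine ⟨i, ?_, fun j hj => ?_⟩
  · simpa [eq_comm] using (Finset.ext_iff.mp hi i).mpr (Finset.mem_singleton_self i)
  · simpa using (Finset.ext_iff.mp hi j).mp (by simpa using hj.symm)

section SignVectors

variable {ι : Type*} [Fintype ι] {w : ι → ℝ}

theorem card_mul_sq_eq_one_of_forall_eq (hw : ∑ x, w x ^ 2 = 1) (hc : ∀ x y, w x = w y)
    (x : ι) : Fintype.card ι * w x ^ 2 = 1 := by
  simpa [hc _ x] using hw

theorem sq_eq_sq_of_card_mul_sq_eq_one (hw : ∀ x, Fintype.card ι * w x ^ 2 = 1) (x y : ι) :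
    w y ^ 2 = w x ^ 2 :=
  mul_left_cancel₀ (left_ne_zero_of_mul_eq_one (hw x)) ((hw y).trans (hw x).symm)

theorem ne_zero_of_card_mul_sq_eq_one (hw : ∀ x, Fintype.card ι * w x ^ 2 = 1) (x : ι) :
    w x ≠ 0 :=
  fun h0 => by simpa [h0] using hw x

theorem exists_eq_neg_of_sum_eq_zero (hw : ∀ x, Fintype.card ι * w x ^ 2 = 1)
    (hsum : ∑ y, w y = 0) (x : ι) : ∃ y, w y = -w x := by
  by_contra! h
  have hconst : ∑ y, w y = Fintype.card ι * w x := by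
    simp [fun y => (sq_eq_sq_iff_eq_or_eq_neg.mp
      (sq_eq_sq_of_card_mul_sq_eq_one hw x y)).resolve_right (h y)]
  rw [hsum] at hconst
  exact left_ne_zero_of_mul_eq_one (hw x)
    ((mul_eq_zero.mp hconst.symm).resolve_right (ne_zero_of_card_mul_sq_eq_one hw x))

theorem exists_int_eq_of_map_mulVec_eq_smul {A : Matrix ι ι ℤ} {μ : ℝ}
    (h : A.map (algebraMap ℤ ℝ) *ᵥ w = μ • w) (hw : ∀ x, Fintype.card ι * w x ^ 2 = 1)
    (x : ι) : ∃ z : ℤ, μ = z := by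
  have hsign : ∀ y, ∃ s : ℤ, w y = s * w x := fun y =>
    (sq_eq_sq_iff_eq_or_eq_neg.mp (sq_eq_sq_of_card_mul_sq_eq_one hw x y)).elim
      (fun h => ⟨1, by simp [h]⟩) (fun h => ⟨-1, by simp [h]⟩)
  choose s hs using hsign
  refine ⟨∑ y, A x y * s y, mul_right_cancel₀ (ne_zero_of_card_mul_sq_eq_one hw x) ?_⟩
  calc μ * w x = ∑ y, (A x y : ℝ) * w y := by
        simpa [mulVec, dotProduct] using (congrFun h x).symm
    _ = (∑ y, A x y * s y : ℤ) * w x := by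
      push_cast
      rw [Finset.sum_mul]
      exact Finset.sum_congr rfl fun y _ => by rw [hs y]; ring

end SignVectors

theorem Matrix.aeval_map_map {ι R S : Type*} [Fintype ι] [DecidableEq ι] [CommSemiring R]
    [CommSemiring S] (f : R →+* S) (M : Matrix ι ι R) (g : R[X]) :
    aeval (M.map f) (g.map f) = (aeval M g).map f :=
  (map_aeval_eq_aeval_map (ψ := f.mapMatrix)
    (by ext; simp [algebraMap_eq_diagonal, diagonal_apply, apply_ite f]) g M).symm

theorem Matrix.aeval_apply_self_eq {R ι : Type*} [CommSemiring R] [Fintype ι]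
    [DecidableEq ι] {A : Matrix ι ι R} (hA : ∀ (r : ℕ) (x y : ι), (A ^ r) x x = (A ^ r) y y)
    (p : R[X]) (x y : ι) : aeval A p x x = aeval A p y y := by
  simp only [aeval_eq_sum_range, Matrix.sum_apply, Matrix.smul_apply, hA _ x y]

namespace Matrix.IsHermitian

variable {ι : Type*} [Fintype ι] [DecidableEq ι] {A : Matrix ι ι ℝ} (hA : A.IsHermitian)

theorem sum_eigenvectorBasis_mul_eigenvectorBasis (i j : ι) :
    ∑ x, hA.eigenvectorBasis i x * hA.eigenvectorBasis j x = if i = j then 1 else 0 := by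
  rw [← orthonormal_iff_ite.mp hA.eigenvectorBasis.orthonormal i j, PiLp.inner_apply]
  simp [mul_comm]

theorem sum_eigenvectorBasis_sq (j : ι) : ∑ x, hA.eigenvectorBasis j x ^ 2 = 1 := by
  simpa [sq] using hA.sum_eigenvectorBasis_mul_eigenvectorBasis j j

theorem sum_eigenvectorBasis_eq_zero_of_forall_eq {i j : ι} (hij : i ≠ j)
    (hc : ∀ x y, hA.eigenvectorBasis i x = hA.eigenvectorBasis i y) :
    ∑ x, hA.eigenvectorBasis j x = 0 := by
  rcases isEmpty_or_nonempty ι with hι | ⟨⟨x₀⟩⟩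
  · simp
  have hx₀ := ne_zero_of_card_mul_sq_eq_one
    (card_mul_sq_eq_one_of_forall_eq (hA.sum_eigenvectorBasis_sq i) hc) x₀
  have horth := hA.sum_eigenvectorBasis_mul_eigenvectorBasis i j
  simp only [if_neg hij, hc _ x₀, ← Finset.mul_sum] at horth
  exact (mul_eq_zero.mp horth).resolve_left hx₀

theorem exists_eigenvalues_eq {v : ι → ℝ} {μ : ℝ} (hv : v ≠ 0) (h : A *ᵥ v = μ • v) :
    ∃ i, hA.eigenvalues i = μ := by
  have hμ : Module.End.HasEigenvalue (toLin' A) μ :=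
    Module.End.hasEigenvalue_of_hasEigenvector ⟨Module.End.mem_eigenspace_iff.mpr h, hv⟩
  simpa [spectrum_toLin', hA.spectrum_real_eq_range_eigenvalues] using hμ.mem_spectrum

theorem aeval_apply (p : ℝ[X]) (x y : ι) :
    aeval A p x y =
      ∑ i, p.eval (hA.eigenvalues i) * (hA.eigenvectorBasis i x * hA.eigenvectorBasis i y) := by
  rw [← cfc_polynomial p A hA.isSelfAdjoint, hA.cfc_eq, IsHermitian.cfc,
    Unitary.conjStarAlgAut_apply, mul_apply]
  refine Finset.sum_congr rfl fun i _ => ?_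
  simp [mul_diagonal]
  ring

theorem aeval_apply_of_eval_eq_zero {i j : ι} (hij : i ≠ j) {p : ℝ[X]}
    (hp : ∀ l, l ≠ i → l ≠ j → p.eval (hA.eigenvalues l) = 0) (x y : ι) :
    aeval A p x y =
      p.eval (hA.eigenvalues i) * (hA.eigenvectorBasis i x * hA.eigenvectorBasis i y) +
        p.eval (hA.eigenvalues j) * (hA.eigenvectorBasis j x * hA.eigenvectorBasis j y) := by
  rw [hA.aeval_apply, Finset.sum_eq_add i j hij (fun l _ hl => by rw [hp l hl.1 hl.2, zero_mul])
    (by simp) (by simp)]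

theorem card_mul_sq_eigenvectorBasis_eq_one
    (hwalk : ∀ (r : ℕ) (x y : ι), (A ^ r) x x = (A ^ r) y y) {j : ι}
    (hj : ∀ i, hA.eigenvalues i = hA.eigenvalues j → i = j) (x : ι) :
    Fintype.card ι * hA.eigenvectorBasis j x ^ 2 = 1 := by
  -- `q(A)` is the orthogonal projection onto the line spanned by the eigenvector, up to scaling
  set q : ℝ[X] := ∏ i ∈ Finset.univ.erase j, (X - C (hA.eigenvalues i))
  have hq0 : ∀ i, i ≠ j → q.eval (hA.eigenvalues i) = 0 := fun i hi => by
    simp only [q, eval_prod, eval_sub, eval_X, eval_C]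
    exact Finset.prod_eq_zero (Finset.mem_erase.mpr ⟨hi, Finset.mem_univ i⟩) (sub_self _)
  have hqj : q.eval (hA.eigenvalues j) ≠ 0 := by
    simp only [q, eval_prod, eval_sub, eval_X, eval_C]
    exact Finset.prod_ne_zero_iff.mpr fun i hi =>
      sub_ne_zero.mpr fun h => (Finset.mem_erase.mp hi).1 (hj i h.symm)
  have hdiag : ∀ y, aeval A q y y = q.eval (hA.eigenvalues j) * hA.eigenvectorBasis j y ^ 2 :=
    fun y => by
      rw [hA.aeval_apply, Finset.sum_eq_single j (fun i _ hi => by rw [hq0 i hi, zero_mul])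
        (fun h => absurd (Finset.mem_univ j) h), sq]
  have htrace : ∑ y, aeval A q y y = q.eval (hA.eigenvalues j) := by
    simp_rw [hdiag, ← Finset.mul_sum, hA.sum_eigenvectorBasis_sq, mul_one]
  have hconst : ∑ y, aeval A q y y = Fintype.card ι * aeval A q x x := by
    simp [Matrix.aeval_apply_self_eq hwalk q _ x]
  rw [htrace, hdiag] at hconst
  exact mul_left_cancel₀ hqj (by linear_combination -hconst)

end Matrix.IsHermitian

theorem IsReg.isRegularOfDegree {V : Type*} [Fintype V] {G : SimpleGraph V}
    [DecidableRel G.Adj] {k : ℕ} (h : IsReg G k) : G.IsRegularOfDegree k := by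
  intro v
  rw [← SimpleGraph.card_neighborSet_eq_degree, ← Nat.card_eq_fintype_card, Nat.card_coe_set_eq]
  exact h v

section Graph

variable {V : Type*} [Fintype V] [DecidableEq V] {G : SimpleGraph V} {k : ℕ}

theorem adjm_eq_adjMatrix [DecidableRel G.Adj] : adjm G = G.adjMatrix ℝ := by
  unfold adjm
  congr

theorem adjm_eq_map_adjMatrix [DecidableRel G.Adj] :
    adjm G = (G.adjMatrix ℤ).map (algebraMap ℤ ℝ) := by
  ext x y
  simp [adjm_eq_adjMatrix, SimpleGraph.adjMatrix_apply]

theorem isHermitian_adjm (G : SimpleGraph V) : (adjm G).IsHermitian := by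
  classical
  rw [adjm_eq_adjMatrix]
  exact G.isHermitian_adjMatrix ℝ

theorem spec_eq_map_eigenvalues (G : SimpleGraph V) :
    spec G = Finset.univ.val.map (isHermitian_adjm G).eigenvalues :=
  (isHermitian_adjm G).roots_charpoly_eq_eigenvalues

theorem aeval_adjm_map_apply (G : SimpleGraph V) [DecidableRel G.Adj] (g : ℤ[X]) (x y : V) :
    aeval (adjm G) (g.map (algebraMap ℤ ℝ)) x y = (aeval (G.adjMatrix ℤ) g x y : ℤ) := by
  rw [adjm_eq_map_adjMatrix, aeval_map_map, map_apply, eq_intCast]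

theorem eval_prod_spec_sdiff_eigenvalues_eq_zero (G : SimpleGraph V) {T : Finset ℝ} {l : V}
    (hl : (isHermitian_adjm G).eigenvalues l ∉ T) :
    (∏ μ ∈ (spec G).toFinset \ T, (X - C μ)).eval ((isHermitian_adjm G).eigenvalues l) = 0 := by
  rw [eval_prod]
  refine Finset.prod_eq_zero (i := (isHermitian_adjm G).eigenvalues l)
    (Finset.mem_sdiff.mpr ⟨?_, hl⟩) (by simp)
  simp [spec_eq_map_eigenvalues]

theorem exists_int_eigenvalues_eq (G : SimpleGraph V) {j : V}
    (hsq : ∀ x, Fintype.card V * (isHermitian_adjm G).eigenvectorBasis j x ^ 2 = 1) :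
    ∃ z : ℤ, (isHermitian_adjm G).eigenvalues j = z := by
  classical
  exact exists_int_eq_of_map_mulVec_eq_smul (A := G.adjMatrix ℤ)
    (by rw [← adjm_eq_map_adjMatrix]; exact (isHermitian_adjm G).mulVec_eigenvectorBasis j) hsq j

theorem exists_map_eq_prod_spec_sdiff (G : SimpleGraph V) (T : Finset ℤ) :
    ∃ g : ℤ[X], g.map (algebraMap ℤ ℝ) =
      ∏ μ ∈ (spec G).toFinset \ T.image Int.cast, (X - C μ) := by
  classical
  have hcharpoly : (adjm G).charpoly = (G.adjMatrix ℤ).charpoly.map (algebraMap ℤ ℝ) := by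
    rw [adjm_eq_map_adjMatrix, charpoly_map]
  have hsplits := (isHermitian_adjm G).splits_charpoly
  rw [hcharpoly] at hsplits
  rw [spec, hcharpoly]
  exact exists_map_eq_prod_aroots_sdiff (G.adjMatrix ℤ).charpoly_monic hsplits T

theorem IsReg.eq_of_adjm_mulVec_eq_smul (h : IsReg G k) (hconn : G.Connected) {v : V → ℝ}
    (hv : adjm G *ᵥ v = (k : ℝ) • v) (x y : V) : v x = v y := by
  classical
  refine (G.lapMatrix_mulVec_eq_zero_iff_forall_reachable (x := v)).mp ?_ x y (hconn x y)
  rw [SimpleGraph.lapMatrix, sub_mulVec, ← adjm_eq_adjMatrix, hv]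
  ext z
  simp [SimpleGraph.degMatrix, mulVec_diagonal, h.isRegularOfDegree z]

theorem IsReg.eigenvectorBasis_apply_eq (h : IsReg G k) (hconn : G.Connected) {i : V}
    (hi : (isHermitian_adjm G).eigenvalues i = k) (x y : V) :
    (isHermitian_adjm G).eigenvectorBasis i x = (isHermitian_adjm G).eigenvectorBasis i y :=
  h.eq_of_adjm_mulVec_eq_smul hconn (hi ▸ (isHermitian_adjm G).mulVec_eigenvectorBasis i) x y

theorem IsReg.existsUnique_eigenvalues_eq (h : IsReg G k) (hconn : G.Connected) :
    ∃! i, (isHermitian_adjm G).eigenvalues i = k := by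
  classical
  have hA := isHermitian_adjm G
  obtain ⟨x₀⟩ := hconn.nonempty
  obtain ⟨i, hi⟩ := hA.exists_eigenvalues_eq (v := Function.const V 1) (μ := k)
    (Function.ne_iff.mpr ⟨x₀, one_ne_zero⟩) (by
      ext x
      simp [adjm_eq_adjMatrix, h.isRegularOfDegree.degree_eq x])
  refine ⟨i, hi, fun j hj => by_contra fun hji => ?_⟩
  -- two constant eigenvectors cannot be orthogonal
  have hsum := hA.sum_eigenvectorBasis_eq_zero_of_forall_eq (Ne.symm hji)
    (h.eigenvectorBasis_apply_eq hconn hi)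
  have hsq := card_mul_sq_eq_one_of_forall_eq (hA.sum_eigenvectorBasis_sq j)
    (h.eigenvectorBasis_apply_eq hconn hj) x₀
  simp only [h.eigenvectorBasis_apply_eq hconn hj _ x₀, Finset.sum_const, Finset.card_univ,
    nsmul_eq_mul] at hsum
  rw [sq, ← mul_assoc, hsum, zero_mul] at hsq
  exact zero_ne_one hsq

theorem IsReg.card_mul_aeval_adjm_apply (h : IsReg G k) (hconn : G.Connected) {j : V}
    (hj : (isHermitian_adjm G).eigenvalues j ≠ k) {p : ℝ[X]}
    (hp : ∀ i, (isHermitian_adjm G).eigenvalues i ≠ k → i ≠ j →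
      p.eval ((isHermitian_adjm G).eigenvalues i) = 0) (x y : V) :
    Fintype.card V * aeval (adjm G) p x y =
      p.eval (k : ℝ) + p.eval ((isHermitian_adjm G).eigenvalues j) *
        (Fintype.card V * ((isHermitian_adjm G).eigenvectorBasis j x *
          (isHermitian_adjm G).eigenvectorBasis j y)) := by
  have hA := isHermitian_adjm G
  obtain ⟨i, hi, hiu⟩ := h.existsUnique_eigenvalues_eq hconn
  have hc := h.eigenvectorBasis_apply_eq hconn hi
  have hone := card_mul_sq_eq_one_of_forall_eq (hA.sum_eigenvectorBasis_sq i) hc x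
  rw [hA.aeval_apply_of_eval_eq_zero (i := i) (j := j) (by rintro rfl; exact hj hi)
    (fun l hli hlj => hp l (fun hl => hli (hiu l hl)) hlj), hi, hc y x]
  linear_combination p.eval (k : ℝ) * hone

theorem IsReg.exists_eigenvectorBasis_apply_eq_neg (h : IsReg G k) (hconn : G.Connected)
    {j : V} (hj : (isHermitian_adjm G).eigenvalues j ≠ k)
    (hsq : ∀ x, Fintype.card V * (isHermitian_adjm G).eigenvectorBasis j x ^ 2 = 1) :
    ∃ x y, (isHermitian_adjm G).eigenvectorBasis j y =
      -(isHermitian_adjm G).eigenvectorBasis j x := by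
  obtain ⟨i, hi, -⟩ := h.existsUnique_eigenvalues_eq hconn
  exact ⟨j, exists_eq_neg_of_sum_eq_zero hsq
    ((isHermitian_adjm G).sum_eigenvectorBasis_eq_zero_of_forall_eq (by rintro rfl; exact hj hi)
      (h.eigenvectorBasis_apply_eq hconn hi)) j⟩

end Graph

theorem stmt_5_general {n k : ℕ} (G : SimpleGraph (Fin n))
    (hconn : G.Connected) (hreg : IsReg G k)
    (hwalk : ∀ (r : ℕ) (x y : Fin n), ((adjm G) ^ r) x x = ((adjm G) ^ r) y y)
    (lj : ℝ) (hne : lj ≠ (k : ℝ))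
    (hsimple : (spec G).count lj = 1) :
    (∃ a : ℤ,
      (∏ mu ∈ (spec G).toFinset \ {(k : ℝ), lj}, ((k : ℝ) - mu)) +
        (∏ mu ∈ (spec G).toFinset \ {(k : ℝ), lj}, (lj - mu)) = (n : ℝ) * a) ∧
    (∃ b : ℤ,
      (∏ mu ∈ (spec G).toFinset \ {(k : ℝ), lj}, ((k : ℝ) - mu)) -
        (∏ mu ∈ (spec G).toFinset \ {(k : ℝ), lj}, (lj - mu)) = (n : ℝ) * b) := by
  classical
  have hA := isHermitian_adjm G
  obtain ⟨j, rfl, hju⟩ :=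
    Multiset.existsUnique_of_count_map_univ_eq_one (spec_eq_map_eigenvalues G ▸ hsimple)
  have hsq := hA.card_mul_sq_eigenvectorBasis_eq_one hwalk hju
  obtain ⟨x, y, hy⟩ := hreg.exists_eigenvectorBasis_apply_eq_neg hconn hne hsq
  obtain ⟨z, hz⟩ := exists_int_eigenvalues_eq G hsq
  obtain ⟨g, hg⟩ := exists_map_eq_prod_spec_sdiff G {(k : ℤ), z}
  rw [Finset.image_insert, Finset.image_singleton, Int.cast_natCast, ← hz] at hg
  set p := ∏ μ ∈ (spec G).toFinset \ {(k : ℝ), hA.eigenvalues j}, (X - C μ)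
  have hentry : ∀ x y, (n : ℝ) * (aeval (G.adjMatrix ℤ) g x y : ℤ) = p.eval (k : ℝ) +
      p.eval (hA.eigenvalues j) * (n * (hA.eigenvectorBasis j x * hA.eigenvectorBasis j y)) :=
    fun x y => by
      have hint := aeval_adjm_map_apply G g x y
      rw [hg] at hint
      have := hreg.card_mul_aeval_adjm_apply hconn hne (p := p)
        (fun l hlk hlj => eval_prod_spec_sdiff_eigenvalues_eq_zero G
          (by simpa [hlk] using fun h => hlj (hju l h))) x y
      rwa [hint, Fintype.card_fin] at this
  have heval : ∀ t : ℝ,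
      ∏ μ ∈ (spec G).toFinset \ {(k : ℝ), hA.eigenvalues j}, (t - μ) = p.eval t :=
    fun t => by simp [p, eval_prod]
  simp only [Fintype.card_fin] at hsq
  rw [heval, heval]
  refine ⟨⟨aeval (G.adjMatrix ℤ) g x x, ?_⟩, ⟨aeval (G.adjMatrix ℤ) g x y, ?_⟩⟩
  · linear_combination -hentry x x - p.eval (hA.eigenvalues j) * hsq x
  · linear_combination -hentry x y + p.eval (hA.eigenvalues j) * hsq x -
      p.eval (hA.eigenvalues j) * n * hA.eigenvectorBasis j x * hy

/-- Under the hypotheses of the half-partition lemma, `n` divides both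
`∏_{i≠j}(k-λᵢ) + ∏_{i≠j}(λⱼ-λᵢ)` and `∏_{i≠j}(k-λᵢ) - ∏_{i≠j}(λⱼ-λᵢ)`, the
products running over the distinct eigenvalues other than `k` and `λⱼ`. -/
theorem stmt_5 {n k : ℕ} (G : SimpleGraph (Fin n))
    (hconn : G.Connected) (hreg : IsReg G k)
    (hwalk : ∀ (r : ℕ) (x y : Fin n), ((adjm G) ^ r) x x = ((adjm G) ^ r) y y)
    (lj : ℝ) (hmem : lj ∈ spec G) (hne : lj ≠ (k : ℝ))
    (hsimple : (spec G).count lj = 1) :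
    (∃ a : ℤ,
      (∏ mu ∈ (spec G).toFinset \ {(k : ℝ), lj}, ((k : ℝ) - mu)) +
        (∏ mu ∈ (spec G).toFinset \ {(k : ℝ), lj}, (lj - mu)) = (n : ℝ) * a) ∧
    (∃ b : ℤ,
      (∏ mu ∈ (spec G).toFinset \ {(k : ℝ), lj}, ((k : ℝ) - mu)) -
        (∏ mu ∈ (spec G).toFinset \ {(k : ℝ), lj}, (lj - mu)) = (n : ℝ) * b) :=
  stmt_5_general G hconn hreg hwalk lj hne hsimple
end

section
/- Suppose a connected k-regular graph on n vertices has spectrum {[k]^1, [−1]^1, [α]^{(n−2)/2}, [β]^{(n−2)/2}} with α, β irrational of the form (a ± √b)/2, a, b ∈ ℤ, b > 0. Then the trace equations force n = 2k, α = (−1+√(2k+1))/2 and β = (−1−√(2k+1))/2. -/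
/-!
Write `m = (n - 2) / 2`, so that counting eigenvalues gives `n = 2m + 2`. The adjacency matrix
has trace `0`, and `tr A² = nk` because `G` is `k`-regular. Since `α + β = a` and
`α² + β² = (a² + b) / 2`, the two trace equations read `k - 1 + m a = 0` and
`k² + 1 + m (a² + b) / 2 = nk`. In the first, `m a = 1 - k` lies strictly between `-2m` and `0`,
so `a = -1` and `m = k - 1`; the second then gives `b = 2k + 1`.
-/

open Polynomial

namespace Matrix.IsHermitian

variable {𝕜 ι : Type*} [RCLike 𝕜] [Fintype ι] [DecidableEq ι] {A : Matrix ι ι 𝕜}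

lemma trace_sq_eq_sum_eigenvalues_sq (hA : A.IsHermitian) :
    (A ^ 2).trace = ∑ i, (hA.eigenvalues i : 𝕜) ^ 2 := by
  conv_lhs => rw [hA.spectral_theorem, ← map_pow, Unitary.conjStarAlgAut_apply, trace_mul_cycle,
    Unitary.coe_star_mul_self, one_mul, diagonal_pow, trace_diagonal]
  simp

end Matrix.IsHermitian

lemma IsReg.degree_eq {V : Type*} {G : SimpleGraph V} [Fintype V] [DecidableRel G.Adj] {k : ℕ}
    (h : IsReg G k) (v : V) : G.degree v = k := by
  rw [← G.card_neighborSet_eq_degree, ← Nat.card_eq_fintype_card, Nat.card_coe_set_eq, h v]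

section Spectrum

variable {V : Type*} [Fintype V] [DecidableEq V] (G : SimpleGraph V)

lemma adjm_isHermitian : (adjm G).IsHermitian := by
  simp only [adjm, Matrix.isHermitian_iff_isSymm]
  classical exact G.isSymm_adjMatrix

lemma spec_eq_eigenvalues : spec G = Finset.univ.val.map (adjm_isHermitian G).eigenvalues := by
  simp [spec, (adjm_isHermitian G).roots_charpoly_eq_eigenvalues]

lemma card_spec : Multiset.card (spec G) = Fintype.card V := by
  simp [spec_eq_eigenvalues]

lemma sum_spec : (spec G).sum = 0 := by
  rw [spec_eq_eigenvalues, ← Finset.sum_eq_multiset_sum]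
  simpa [adjm] using (adjm_isHermitian G).trace_eq_sum_eigenvalues.symm

lemma sum_sq_spec {k : ℕ} (h : IsReg G k) :
    ((spec G).map (· ^ 2 : ℝ → ℝ)).sum = Fintype.card V * k := by
  classical
  rw [spec_eq_eigenvalues, Multiset.map_map, ← Finset.sum_eq_multiset_sum]
  calc ∑ i, (adjm_isHermitian G).eigenvalues i ^ 2 = (adjm G ^ 2).trace := by
        simpa using ((adjm_isHermitian G).trace_sq_eq_sum_eigenvalues_sq).symm
    _ = ∑ v, (G.degree v : ℝ) := by
        simp only [Matrix.trace, Matrix.diag, sq, adjm, SimpleGraph.adjMatrix_mul_self_apply_self]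
    _ = Fintype.card V * k := by simp [h.degree_eq]

end Spectrum

lemma trace_equations_solution {k m : ℕ} {a : ℤ} {b : ℝ} (hk1 : 1 < k) (hk2 : k < 2 * m + 1)
    (h1 : (k : ℝ) - 1 + m * a = 0)
    (h2 : (k : ℝ) ^ 2 + 1 + m * ((a ^ 2 + b) / 2) = (2 * m + 2) * k) :
    a = -1 ∧ m + 1 = k ∧ b = 2 * k + 1 := by
  have h1 : (k : ℤ) - 1 + m * a = 0 := by exact_mod_cast h1
  have ha : a = -1 := by
    have : a < 0 := by nlinarith
    have : -2 < a := by nlinarith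
    omega
  subst ha
  have hm : m + 1 = k := by omega
  subst hm
  refine ⟨rfl, rfl, ?_⟩
  have hm0 : (0 : ℝ) < m := by exact_mod_cast (by omega : 0 < m)
  have : (m : ℝ) * (b - (2 * m + 3)) = 0 := by push_cast at h2; linear_combination 2 * h2
  push_cast
  linarith [(mul_eq_zero.1 this).resolve_left hm0.ne']

theorem stmt_12_general {n k : ℕ} (G : SimpleGraph (Fin n))
    (hreg : IsReg G k)
    (hk1 : 1 < k) (hk2 : k < n - 1)
    (a b : ℤ) (hb : 0 < b) (al be : ℝ)
    (hal : al = ((a : ℝ) + Real.sqrt b) / 2)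
    (hbe : be = ((a : ℝ) - Real.sqrt b) / 2)
    (hspec : spec G = {(k : ℝ), (-1 : ℝ)} + Multiset.replicate ((n - 2) / 2) al +
      Multiset.replicate ((n - 2) / 2) be) :
    n = 2 * k ∧
    al = (-1 + Real.sqrt (2 * k + 1)) / 2 ∧
    be = (-1 - Real.sqrt (2 * k + 1)) / 2 := by
  set m := (n - 2) / 2
  have hcard : m + m + 2 = n := by simpa [hspec] using card_spec G
  have htrace : (k : ℝ) - 1 + m * al + m * be = 0 := by
    simpa [hspec, add_assoc, sub_eq_add_neg] using sum_spec G
  have htrace_sq : (k : ℝ) ^ 2 + 1 + m * al ^ 2 + m * be ^ 2 = n * k := by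
    simpa [hspec, add_assoc] using sum_sq_spec G hreg
  have hsum : al + be = a := by rw [hal, hbe]; ring
  have hsum_sq : al ^ 2 + be ^ 2 = (a ^ 2 + b) / 2 := by
    rw [hal, hbe]; linear_combination Real.sq_sqrt (by positivity : (0 : ℝ) ≤ b) / 2
  have hn : (n : ℝ) = 2 * m + 2 := by rw [← hcard]; push_cast; ring
  obtain ⟨rfl, hmk, hbk⟩ := trace_equations_solution (m := m) (a := a) (b := b) hk1 (by omega)
    (by linear_combination htrace - m * hsum)
    (by linear_combination htrace_sq - m * hsum_sq + k * hn)
  refine ⟨by omega, ?_, ?_⟩ <;> simp [hal, hbe, hbk]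

/-- If a connected `k`-regular graph on `n` vertices has spectrum
`{[k]^1, [-1]^1, [α]^{(n-2)/2}, [β]^{(n-2)/2}}` with `α, β` irrational of the form
`(a ± √b)/2`, `a, b ∈ ℤ`, `b > 0`, then `n = 2k`, `α = (-1+√(2k+1))/2` and
`β = (-1-√(2k+1))/2`. -/
theorem stmt_12 {n k : ℕ} (G : SimpleGraph (Fin n))
    (hconn : G.Connected) (hreg : IsReg G k)
    (hk1 : 1 < k) (hk2 : k < n - 1)
    (a b : ℤ) (hb : 0 < b) (al be : ℝ)
    (hal : al = ((a : ℝ) + Real.sqrt b) / 2)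
    (hbe : be = ((a : ℝ) - Real.sqrt b) / 2)
    (hirr1 : Irrational al) (hirr2 : Irrational be)
    (hspec : spec G = {(k : ℝ), (-1 : ℝ)} + Multiset.replicate ((n - 2) / 2) al +
      Multiset.replicate ((n - 2) / 2) be) :
    n = 2 * k ∧
    al = (-1 + Real.sqrt (2 * k + 1)) / 2 ∧
    be = (-1 - Real.sqrt (2 * k + 1)) / 2 :=
  stmt_12_general G hreg hk1 hk2 a b hb al be hal hbe hspec
end
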